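/- Assume R ≥ 2, (QR−1)/(R−1) ≤ L, and set α = 1, k = ⌊(Q−R)/(R−1)⌋, l = Q−R−k(R−1), with index sets I_m = [1 : Q+k+1] for m ∈ [1 : R−l−1], I_m = [1 : Q+k+2] for m ∈ [R−l : R−1], and I_R = [1:L]. Set K = [1 : ⌈(QR−1)/(R−1)⌉]. If every Q row vectors of the submatrix Q_K are linearly independent (Property (A)), then det(J4(·)) is not identically zero, i.e., there exists s ∈ ℂ^{QR} with det(J4(s)) ≠ 0. -/

import Mathlib

open Matrix Kronecker

noncomputable section

/-- The block-diagonal row-selection matrix `diag((I_L)_{I_1}, …, (I_L)_{I_R})` where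
`I_m = [1 : sz m]` is an initial segment: row `(m, i)`, column `(m', j)` carries a `1`
iff `m = m'` and `i = j`. -/
def selBlocks (L R : ℕ) (sz : Fin R → ℕ) :
    Matrix ((m : Fin R) × Fin (sz m)) (Fin R × Fin L) ℂ :=
  Matrix.of fun r mj => if r.1 = mj.1 ∧ (r.2 : ℕ) = (mj.2 : ℕ) then 1 else 0

/-- The vector `a_i = (I_R ⊗ diag(e_i) Q) s ∈ ℂ^{LR}`. -/
def aVec {L Q R : ℕ} (Qmat : Matrix (Fin L) (Fin Q) ℂ) (s : Fin R × Fin Q → ℂ)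
    (i : Fin L) : Fin R × Fin L → ℂ :=
  ((1 : Matrix (Fin R) (Fin R) ℂ) ⊗ₖ
    (Matrix.diagonal (fun j => if j = i then (1 : ℂ) else 0) * Qmat)).mulVec s

/-- The matrix `J4(s) = P1 [(I_R ⊗ Q) | a_{α+1} | … | a_{c_{R−1}}]`, where
`P1 = diag((I_L)_{I_1}, …, (I_L)_{I_{R−1}}, (I_L)_{I_{R−1}})` and `I_i = [1 : c (i-1)]`
(0-based: block `m` of `P1` has size `c (min m (R-2))`, so the last block is duplicated).
Rows are indexed by `(m : Fin R) × Fin (c (min m (R-2)))`, columns by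
`(Fin R × Fin Q) ⊕ Fin (c (R-2) − α)`; appended column `j` (0-based) is
`a_{α+1+j}` (1-based), i.e. `aVec` at the `Fin L`-index `α + j` (0-based). -/
def J4 (L Q R α : ℕ) (Qmat : Matrix (Fin L) (Fin Q) ℂ) (c : ℕ → ℕ)
    (s : Fin R × Fin Q → ℂ) :
    Matrix ((m : Fin R) × Fin (c (min (m : ℕ) (R - 2))))
      ((Fin R × Fin Q) ⊕ Fin (c (R - 2) - α)) ℂ :=
  selBlocks L R (fun m => c (min (m : ℕ) (R - 2))) *
    Matrix.fromCols ((1 : Matrix (Fin R) (Fin R) ℂ) ⊗ₖ Qmat)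
      (Matrix.of fun rj (j : Fin (c (R - 2) - α)) =>
        if h : α + (j : ℕ) < L then aVec Qmat s ⟨α + (j : ℕ), h⟩ rj else 0)

/-! Give the `c_m - Q` surplus rows of block `m` to consecutive appended columns: block `m` takes
the rows `α + off m, …, α + off (m + 1) - 1`, i.e. the columns `a_{α + off m + 1}, …`. Choose
`s_m ≠ 0` orthogonal to the block's other rows except row `0`. On those `Q` rows the appended
columns contribute nothing, so Property (A) forces the `x_m`-part of a kernel vector to vanish;
on a row `i` of the window only the term `(q_i ⬝ s_m) y_{i-α}` survives, and `q_i ⬝ s_m ≠ 0`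
since otherwise `s_m` would be orthogonal to `Q` independent rows. Hence `J4(s)` is injective.
For the prescribed sizes each block has surplus `k + 1` or `k + 2`, and these add up exactly to
the number `|I_{R-1}| - 1` of appended columns. -/

section Orthogonal

variable {ι n K : Type*} [Field K] [Fintype n] (u : ι → n → K)

theorem eq_zero_of_forall_dotProduct_eq_zero {S : Finset ι}
    (hS : LinearIndependent K fun j : S => u j) (hcard : S.card = Fintype.card n)
    {v : n → K} (hv : ∀ i ∈ S, u i ⬝ᵥ v = 0) : v = 0 := by
  have hspan : Submodule.span K (Set.range fun j : S => u j) = ⊤ :=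
    hS.span_eq_top_of_card_eq_finrank' (by simpa using hcard)
  have hker : Submodule.span K (Set.range fun j : S => u j) ≤
      LinearMap.ker (dotProductBilin K K v) := by
    rw [Submodule.span_le]
    rintro _ ⟨j, rfl⟩
    rw [SetLike.mem_coe, LinearMap.mem_ker, dotProductBilin_apply_apply, dotProduct_comm]
    exact hv j j.2
  rw [← dotProduct_eq_zero_iff]
  intro w
  exact hker (hspan ▸ Submodule.mem_top : w ∈ _)

theorem exists_ne_zero_forall_dotProduct_eq_zero {S : Finset ι}
    (hcard : S.card < Fintype.card n) : ∃ v ≠ 0, ∀ i ∈ S, u i ⬝ᵥ v = 0 := by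
  have hker : LinearMap.ker (Matrix.of fun j : S => u j).mulVecLin ≠ ⊥ :=
    LinearMap.ker_ne_bot_of_finrank_lt (by simpa using hcard)
  obtain ⟨v, hv, hv0⟩ := (Submodule.ne_bot_iff _).mp hker
  exact ⟨v, hv0, fun i hi => congrFun hv ⟨i, hi⟩⟩

theorem exists_dotProduct_eq_zero_and_ne_zero [DecidableEq ι] {P F : Finset ι}
    (hP : ∀ S ⊆ P, S.card = Fintype.card n → LinearIndependent K fun j : S => u j)
    (hFP : F ⊆ P) (hF : F.card = Fintype.card n) {i₀ : ι} (hi₀ : i₀ ∈ F) :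
    ∃ v, (∀ i ∈ F, i ≠ i₀ → u i ⬝ᵥ v = 0) ∧ ∀ i ∈ P \ F, u i ⬝ᵥ v ≠ 0 := by
  have hcard : (F.erase i₀).card + 1 = Fintype.card n := by
    rw [Finset.card_erase_add_one hi₀, hF]
  obtain ⟨v, hv0, hv⟩ := exists_ne_zero_forall_dotProduct_eq_zero u (S := F.erase i₀) (by omega)
  refine ⟨v, fun i hi hii₀ => hv i (Finset.mem_erase.mpr ⟨hii₀, hi⟩), fun i hi hiv => hv0 ?_⟩
  -- `v` would be orthogonal to the `card n` independent vectors `insert i (F.erase i₀)`.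
  obtain ⟨hiP, hiF⟩ := Finset.mem_sdiff.mp hi
  have hins : (insert i (F.erase i₀)).card = Fintype.card n := by
    rw [Finset.card_insert_of_notMem fun h => hiF (Finset.mem_of_mem_erase h), hcard]
  refine eq_zero_of_forall_dotProduct_eq_zero u
    (hP _ (Finset.insert_subset hiP ((Finset.erase_subset i₀ F).trans hFP)) hins) hins ?_
  simpa [hiv] using hv

end Orthogonal

def finRangeSdiffIco (L n a b : ℕ) : Finset (Fin L) :=
  {i : Fin L | (i : ℕ) < n ∧ ¬(a ≤ (i : ℕ) ∧ (i : ℕ) < b)}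

theorem card_finRangeSdiffIco {L n a b : ℕ} (hnL : n ≤ L) (hbn : b ≤ n) :
    (finRangeSdiffIco L n a b).card = n - (b - a) := by
  have hmap : (finRangeSdiffIco L n a b).map Fin.valEmbedding =
      Finset.range n \ Finset.Ico a b := by
    ext j
    simp only [finRangeSdiffIco, Finset.mem_map, Finset.mem_filter, Finset.mem_univ, true_and,
      Fin.valEmbedding_apply, Finset.mem_sdiff, Finset.mem_range, Finset.mem_Ico]
    constructor
    · rintro ⟨i, hi, rfl⟩
      exact hi
    · intro hj
      exact ⟨⟨j, by omega⟩, hj, rfl⟩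
  rw [← Finset.card_map, hmap, Finset.card_sdiff_of_subset, Finset.card_range, Nat.card_Ico]
  intro i
  simp only [Finset.mem_Ico, Finset.mem_range]
  omega

def PropertyA {L Q : ℕ} (Qmat : Matrix (Fin L) (Fin Q) ℂ) (K : ℕ) : Prop :=
  ∀ S : Finset (Fin L), (∀ j ∈ S, (j : ℕ) < K) → S.card = Q →
    LinearIndependent ℂ fun j : S => Qmat j

namespace PropertyA

variable {L Q K n a b : ℕ} {Qmat : Matrix (Fin L) (Fin Q) ℂ}

theorem eq_zero_of_forall_dotProduct_eq_zero (hA : PropertyA Qmat K) (hnK : n ≤ K)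
    (hKL : K ≤ L) (hbn : b ≤ n) (hQ : n - (b - a) = Q) {w : Fin Q → ℂ}
    (hw : ∀ i ∈ finRangeSdiffIco L n a b, Qmat i ⬝ᵥ w = 0) : w = 0 := by
  have hcard := card_finRangeSdiffIco (a := a) (hnK.trans hKL) hbn
  refine _root_.eq_zero_of_forall_dotProduct_eq_zero Qmat (hA _ (fun j hj => ?_) ?_) ?_ hw
  · simp only [finRangeSdiffIco, Finset.mem_filter] at hj
    omega
  · rw [hcard, hQ]
  · rw [hcard, hQ, Fintype.card_fin]

theorem exists_dotProduct_eq_zero_and_ne_zero (hA : PropertyA Qmat K) (hnK : n ≤ K)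
    (hKL : K ≤ L) (ha : 1 ≤ a) (hab : a ≤ b) (hbn : b ≤ n) (hQ : n - (b - a) = Q) :
    ∃ v, (∀ i ∈ finRangeSdiffIco L n a b, (i : ℕ) ≠ 0 → Qmat i ⬝ᵥ v = 0) ∧
      ∀ i : Fin L, a ≤ (i : ℕ) → (i : ℕ) < b → Qmat i ⬝ᵥ v ≠ 0 := by
  have hL : 0 < L := by omega
  have h0 : (⟨0, hL⟩ : Fin L) ∈ finRangeSdiffIco L n a b := by
    simp only [finRangeSdiffIco, Finset.mem_filter, Finset.mem_univ, true_and]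
    omega
  obtain ⟨v, hvF, hvP⟩ := _root_.exists_dotProduct_eq_zero_and_ne_zero Qmat
    (P := {j : Fin L | (j : ℕ) < K})
    (fun S hS hSQ => hA S (fun j hj => by simpa using hS hj) (by simpa using hSQ))
    (fun i hi => by
      simp only [finRangeSdiffIco, Finset.mem_filter, Finset.mem_univ, true_and] at hi ⊢
      omega)
    (by rw [card_finRangeSdiffIco (hnK.trans hKL) hbn, hQ, Fintype.card_fin]) h0
  refine ⟨v, fun i hi hi0 => hvF i hi (Fin.ne_of_val_ne hi0), fun i hai hib => hvP i ?_⟩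
  simp only [finRangeSdiffIco, Finset.mem_sdiff, Finset.mem_filter, Finset.mem_univ, true_and]
  omega

end PropertyA

theorem one_kronecker_mulVec_apply {ι m n α : Type*} [CommSemiring α] [Fintype ι]
    [DecidableEq ι] [Fintype n] (B : Matrix m n α) (v : ι × n → α) (i : ι) (j : m) :
    ((1 : Matrix ι ι α) ⊗ₖ B *ᵥ v) (i, j) = B j ⬝ᵥ fun q => v (i, q) := by
  simp only [mulVec, dotProduct, kroneckerMap_apply, Fintype.sum_prod_type]
  rw [Finset.sum_eq_single i]
  · simp
  · intro i' _ hi'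
    simp [one_apply_ne (Ne.symm hi')]
  · simp

theorem selBlocks_mulVec_apply {L R : ℕ} {sz : Fin R → ℕ} (w : Fin R × Fin L → ℂ)
    (m : Fin R) (i : Fin (sz m)) (hi : (i : ℕ) < L) :
    (selBlocks L R sz *ᵥ w) ⟨m, i⟩ = w (m, ⟨i, hi⟩) := by
  have hrow : (fun col => selBlocks L R sz ⟨m, i⟩ col) = Pi.single (m, ⟨i, hi⟩) 1 := by
    funext col
    simp [selBlocks, Pi.single_apply, Prod.ext_iff, Fin.ext_iff, eq_comm]
  exact (congrArg (· ⬝ᵥ w) hrow).trans (single_one_dotProduct _ _)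

theorem aVec_apply {L Q R : ℕ} (Qmat : Matrix (Fin L) (Fin Q) ℂ) (s : Fin R × Fin Q → ℂ)
    (i : Fin L) (m : Fin R) (j : Fin L) :
    aVec Qmat s i (m, j) = if j = i then Qmat i ⬝ᵥ fun q => s (m, q) else 0 := by
  rw [aVec, one_kronecker_mulVec_apply]
  split_ifs with h
  · subst h
    congr 1
    ext q
    simp [diagonal_mul]
  · have : (diagonal (fun j' => if j' = i then (1 : ℂ) else 0) * Qmat) j = 0 := by
      ext q
      simp [diagonal_mul, h]
    rw [this, zero_dotProduct]

section J4

variable {L Q R α : ℕ} (Qmat : Matrix (Fin L) (Fin Q) ℂ) (c : ℕ → ℕ) (s : Fin R × Fin Q → ℂ)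
  (x : (Fin R × Fin Q) ⊕ Fin (c (R - 2) - α) → ℂ) (m : Fin R)

theorem J4_mulVec_apply (i : Fin (c (min (m : ℕ) (R - 2)))) (hi : (i : ℕ) < L) :
    (J4 L Q R α Qmat c s *ᵥ x) ⟨m, i⟩ =
      (Qmat ⟨i, hi⟩ ⬝ᵥ fun q => x (.inl (m, q))) +
        ∑ t : Fin (c (R - 2) - α), if (i : ℕ) = α + t then
          (Qmat ⟨i, hi⟩ ⬝ᵥ fun q => s (m, q)) * x (.inr t) else 0 := by
  rw [J4, ← mulVec_mulVec, selBlocks_mulVec_apply _ _ _ hi, fromCols_mulVec, Pi.add_apply,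
    one_kronecker_mulVec_apply]
  congr 1
  simp only [mulVec, dotProduct, of_apply, Function.comp_apply]
  refine Finset.sum_congr rfl fun t _ => ?_
  split_ifs with h1 h2 h2
  · rw [aVec_apply, if_pos (Fin.ext h2), show (⟨α + t, h1⟩ : Fin L) = ⟨i, hi⟩ from Fin.ext h2.symm]
    rfl
  · rw [aVec_apply, if_neg (fun h => h2 (congrArg Fin.val h)), zero_mul]
  · exact absurd hi (h2 ▸ h1)
  · rw [zero_mul]

theorem J4_mulVec_apply_of_dotProduct_eq_zero (i : Fin (c (min (m : ℕ) (R - 2))))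
    (hi : (i : ℕ) < L) (h : (i : ℕ) < α ∨ (Qmat ⟨i, hi⟩ ⬝ᵥ fun q => s (m, q)) = 0) :
    (J4 L Q R α Qmat c s *ᵥ x) ⟨m, i⟩ = Qmat ⟨i, hi⟩ ⬝ᵥ fun q => x (.inl (m, q)) := by
  rw [J4_mulVec_apply _ _ _ _ _ _ hi, Finset.sum_eq_zero, add_zero]
  intro t _
  split_ifs with hit
  · rw [h.resolve_left (by omega), zero_mul]
  · rfl

theorem J4_mulVec_apply_add (t : Fin (c (R - 2) - α))
    (hi : α + (t : ℕ) < c (min (m : ℕ) (R - 2))) (hiL : α + (t : ℕ) < L) :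
    (J4 L Q R α Qmat c s *ᵥ x) ⟨m, ⟨α + t, hi⟩⟩ =
      (Qmat ⟨α + t, hiL⟩ ⬝ᵥ fun q => x (.inl (m, q))) +
        (Qmat ⟨α + t, hiL⟩ ⬝ᵥ fun q => s (m, q)) * x (.inr t) := by
  rw [J4_mulVec_apply _ _ _ _ _ _ hiL, Finset.sum_eq_single t, if_pos rfl]
  · intro t' _ ht'
    refine if_neg fun h => ht' (Fin.ext ?_)
    dsimp only at h
    omega
  · simp

end J4

theorem exists_lt_and_le_and_lt_succ (f : ℕ → ℕ) {n t : ℕ} (h0 : f 0 ≤ t) (hn : t < f n) :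
    ∃ m < n, f m ≤ t ∧ t < f (m + 1) := by
  induction n with
  | zero => omega
  | succ n ih =>
    by_cases ht : t < f n
    · obtain ⟨m, hm, hmt⟩ := ih ht
      exact ⟨m, by omega, hmt⟩
    · exact ⟨n, by omega, by omega, hn⟩

theorem add_le_of_add_eq_add {off sz : ℕ → ℕ} {R Q α m : ℕ} (hmono : Monotone off)
    (hstep : ∀ m < R, off m + sz m = off (m + 1) + Q) (hlast : α + off R = sz (R - 1))
    (hm : m < R) : α + off (m + 1) ≤ sz m := by
  have hm1 := hstep m hm
  have hm2 := hmono (show m ≤ m + 1 by omega)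
  rcases (show m + 1 < R ∨ m + 1 = R by omega) with hmR | rfl
  · -- the blocks before the last one even satisfy `α + off (m + 1) ≤ Q`
    have hR1 := hstep (R - 1) (by omega)
    rw [show R - 1 + 1 = R by omega] at hR1
    have := hmono (show m + 1 ≤ R - 1 by omega)
    omega
  · rw [Nat.add_sub_cancel] at hlast
    omega

theorem exists_J4_mulVec_injective {L Q R α K : ℕ} {Qmat : Matrix (Fin L) (Fin Q) ℂ}
    {c off : ℕ → ℕ} (hα : 1 ≤ α) (hmono : Monotone off) (hoff0 : off 0 = 0)
    (hstep : ∀ m < R, off m + c (min m (R - 2)) = off (m + 1) + Q)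
    (hlast : α + off R = c (R - 2))
    (hcK : ∀ m < R, c (min m (R - 2)) ≤ K) (hKL : K ≤ L) (hA : PropertyA Qmat K) :
    ∃ s, Function.Injective (J4 L Q R α Qmat c s *ᵥ ·) := by
  have hfit : ∀ m < R, α + off (m + 1) ≤ c (min m (R - 2)) := fun m hm =>
    add_le_of_add_eq_add hmono hstep (by rwa [show min (R - 1) (R - 2) = R - 2 by omega]) hm
  have hQ : ∀ m < R, c (min m (R - 2)) - (α + off (m + 1) - (α + off m)) = Q := fun m hm => by
    have := hstep m hm
    have := hfit m hm
    have := hmono (show m ≤ m + 1 by omega)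
    omega
  choose s hsF hsA using fun m : Fin R =>
    hA.exists_dotProduct_eq_zero_and_ne_zero (hcK m m.2) hKL (by omega)
      (by have := hmono (show (m : ℕ) ≤ m + 1 by omega); omega) (hfit m m.2) (hQ m m.2)
  refine ⟨fun p => s p.1 p.2, fun x y hxy => sub_eq_zero.mp ?_⟩
  set z := x - y
  have hz : J4 L Q R α Qmat c (fun p => s p.1 p.2) *ᵥ z = 0 := by
    rw [mulVec_sub, sub_eq_zero]
    exact hxy
  have hzQ : ∀ m : Fin R, (fun q => z (.inl (m, q))) = 0 := by
    intro m
    refine hA.eq_zero_of_forall_dotProduct_eq_zero (hcK m m.2) hKL (hfit m m.2) (hQ m m.2)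
      fun i hi => ?_
    have hin : (i : ℕ) < c (min (m : ℕ) (R - 2)) := by
      simp only [finRangeSdiffIco, Finset.mem_filter] at hi
      exact hi.2.1
    rw [← J4_mulVec_apply_of_dotProduct_eq_zero Qmat c _ z m ⟨i, hin⟩ i.2, hz]
    · rfl
    · rcases Nat.eq_zero_or_pos (i : ℕ) with h | h
      · exact .inl (show (i : ℕ) < α by omega)
      · exact .inr (hsF m i hi h.ne')
  have hzy : ∀ t, z (.inr t) = 0 := by
    intro t
    obtain ⟨m, hm, hmt⟩ := exists_lt_and_le_and_lt_succ off (by rw [hoff0]; exact Nat.zero_le _)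
      (show (t : ℕ) < off R by omega)
    have hic : α + (t : ℕ) < c (min m (R - 2)) := by have := hfit m hm; omega
    have hiL : α + (t : ℕ) < L := hic.trans_le ((hcK m hm).trans hKL)
    have hrow := congrFun hz ⟨⟨m, hm⟩, ⟨α + t, hic⟩⟩
    rw [J4_mulVec_apply_add _ _ _ _ _ _ _ hiL, hzQ, dotProduct_zero, zero_add] at hrow
    exact (mul_eq_zero.mp hrow).resolve_left
      (hsA ⟨m, hm⟩ ⟨α + t, hiL⟩ (show α + off m ≤ α + t by omega)
        (show α + t < α + off (m + 1) by omega))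
  funext p
  rcases p with ⟨m, q⟩ | t
  · exact congrFun (hzQ m) q
  · exact hzy t

theorem det_submatrix_ne_zero_of_mulVec_injective {m n K : Type*} [Fintype n] [DecidableEq n]
    [Field K] {M : Matrix m n K} (e : n ≃ m) (hM : Function.Injective (M *ᵥ ·)) :
    (M.submatrix e id).det ≠ 0 := by
  have hinj : Function.Injective (M.submatrix e id *ᵥ ·) := fun x y hxy =>
    hM <| e.surjective.injective_comp_right <| by
      have hx := submatrix_mulVec_equiv M x e (Equiv.refl n)
      have hy := submatrix_mulVec_equiv M y e (Equiv.refl n)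
      exact hx.symm.trans (hxy.trans hy)
  exact (isUnit_iff_isUnit_det _).mp (mulVec_injective_iff_isUnit.mp hinj) |>.ne_zero

/-- Each block takes `k + 1` appended columns, and the blocks from `T` on one more. -/
def blockOffset (k T m : ℕ) : ℕ := m * (k + 1) + (m - T)

theorem blockOffset_monotone (k T : ℕ) : Monotone (blockOffset k T) := fun _ _ h =>
  Nat.add_le_add (Nat.mul_le_mul_right _ h) (Nat.sub_le_sub_right h _)

theorem blockOffset_succ (k T m : ℕ) :
    blockOffset k T (m + 1) = blockOffset k T m + (k + 1 + if T ≤ m then 1 else 0) := by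
  rw [blockOffset, blockOffset, Nat.succ_mul]
  split_ifs <;> omega

theorem eq_add_mul_add_of_div_of_sub {Q R k l : ℕ} (hR : 2 ≤ R) (hRQ : R ≤ Q)
    (hk : k = (Q - R) / (R - 1)) (hl : l = Q - R - k * (R - 1)) :
    Q = R + k * (R - 1) + l ∧ l < R - 1 := by
  have hdiv := Nat.div_add_mod (Q - R) (R - 1)
  have hmod := Nat.mod_lt (Q - R) (show 0 < R - 1 by omega)
  rw [← hk, Nat.mul_comm] at hdiv
  omega

theorem mul_sub_one_add_div_eq {Q R k l : ℕ} (hR : 2 ≤ R) (hQ : Q = R + k * (R - 1) + l)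
    (hlR : l < R - 1) :
    (Q * R - 1 + (R - 2)) / (R - 1) = Q + k + 1 + if l = 0 then 0 else 1 := by
  obtain ⟨r, rfl⟩ : ∃ r, R = r + 2 := ⟨R - 2, by omega⟩
  simp only [Nat.add_sub_cancel, show r + 2 - 1 = r + 1 by omega] at *
  subst hQ
  apply Nat.div_eq_of_lt_le <;> split_ifs <;> ring_nf <;> omega

theorem one_add_blockOffset_eq {Q R k l : ℕ} (hR : 2 ≤ R) (hQ : Q = R + k * (R - 1) + l)
    (hlR : l < R - 1) :
    1 + blockOffset k (if l = 0 then R else R - l - 1) R =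
      Q + k + 1 + if l = 0 then 0 else 1 := by
  obtain ⟨r, rfl⟩ : ∃ r, R = r + 2 := ⟨R - 2, by omega⟩
  simp only [blockOffset, show r + 2 - 1 = r + 1 by omega] at *
  subst hQ
  split_ifs <;> ring_nf <;> omega

theorem statement4_general {L Q R : ℕ} (hR : 2 ≤ R) (hRQ : R ≤ Q)
    (hKL : Q * R - 1 ≤ L * (R - 1))
    (k l : ℕ) (hk : k = (Q - R) / (R - 1)) (hl : l = Q - R - k * (R - 1))
    (c : ℕ → ℕ) (hc : ∀ m : ℕ, c m = if m < R - l - 1 then Q + k + 1 else Q + k + 2)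
    (Kcard : ℕ) (hKcard : Kcard = (Q * R - 1 + (R - 2)) / (R - 1))
    (Qmat : Matrix (Fin L) (Fin Q) ℂ)
    (hA : ∀ S : Finset (Fin L), (∀ j ∈ S, (j : ℕ) < Kcard) → S.card = Q →
      LinearIndependent ℂ (fun (j : S) => Qmat j)) :
    ∀ e : ((Fin R × Fin Q) ⊕ Fin (c (R - 2) - 1)) ≃
        ((m : Fin R) × Fin (c (min (m : ℕ) (R - 2)))),
      ∃ s : Fin R × Fin Q → ℂ,
        ((J4 L Q R 1 Qmat c s).submatrix e id).det ≠ 0 := by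
  intro e
  obtain ⟨hQ, hlR⟩ := eq_add_mul_add_of_div_of_sub hR hRQ hk hl
  set T := if l = 0 then R else R - l - 1 with hT
  have hsize : ∀ m < R, c (min m (R - 2)) = Q + k + 1 + if T ≤ m then 1 else 0 := by
    intro m hm
    rw [hc, hT]
    split_ifs <;> omega
  have hlast : c (R - 2) = Q + k + 1 + if l = 0 then 0 else 1 := by
    rw [hc]
    split_ifs <;> omega
  have hK : Kcard = c (R - 2) := by rw [hKcard, hlast, mul_sub_one_add_div_eq hR hQ hlR]
  have hKcardL : Kcard ≤ L := by
    rw [hKcard, ← Nat.lt_succ_iff, Nat.div_lt_iff_lt_mul (by omega), Nat.succ_mul]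
    omega
  obtain ⟨s, hs⟩ := exists_J4_mulVec_injective (α := 1) (c := c) (off := blockOffset k T) le_rfl
    (blockOffset_monotone k T) (by simp [blockOffset])
    (fun m hm => by rw [blockOffset_succ, hsize m hm]; omega)
    (by rw [one_add_blockOffset_eq hR hQ hlR, hlast])
    (fun m hm => by rw [hK, hsize m hm, hlast, hT]; split_ifs <;> omega) hKcardL hA
  exact ⟨s, det_submatrix_ne_zero_of_mulVec_injective e hs⟩

theorem statement4 {L Q R : ℕ} (hR : 2 ≤ R) (hRQ : R ≤ Q) (hQL : Q < L)
    (hKL : Q * R - 1 ≤ L * (R - 1))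
    (k l : ℕ) (hk : k = (Q - R) / (R - 1)) (hl : l = Q - R - k * (R - 1))
    (c : ℕ → ℕ) (hc : ∀ m : ℕ, c m = if m < R - l - 1 then Q + k + 1 else Q + k + 2)
    (Kcard : ℕ) (hKcard : Kcard = (Q * R - 1 + (R - 2)) / (R - 1))
    (Qmat : Matrix (Fin L) (Fin Q) ℂ)
    (hA : ∀ S : Finset (Fin L), (∀ j ∈ S, (j : ℕ) < Kcard) → S.card = Q →
      LinearIndependent ℂ (fun (j : S) => Qmat j)) :
    ∀ e : ((Fin R × Fin Q) ⊕ Fin (c (R - 2) - 1)) ≃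
        ((m : Fin R) × Fin (c (min (m : ℕ) (R - 2)))),
      ∃ s : Fin R × Fin Q → ℂ,
        ((J4 L Q R 1 Qmat c s).submatrix e id).det ≠ 0 :=
  statement4_general hR hRQ hKL k l hk hl c hc Kcard hKcard Qmat hA
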